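/- arXiv:1704.00944 — 2 statements merged into one kernel-verified Lean document; each statement's English description precedes it below -/
import Mathlib

section
/- Let q : ℝ → ℝ be a C² function of period 2π. Then ∫₀^{2π} (q''(φ))² - (q'(φ))² dφ ≥ 4·(∫₀^{2π} (q'(φ))² - (q(φ))² dφ) + (2/π)·(∫₀^{2π} q(φ) dφ)², and in particular the left-hand side minus the right-hand side is nonnegative. -/
/-!
Let `c n` be the Fourier coefficients of `q` on `[0, 2π]`. Parseval's identity and
`c n (q') = i n c n (q)` give `W q = 2π ∑ (n² - 1) |c n|²` and `W q' = 2π ∑ n² (n² - 1) |c n|²`,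
while `(∫ q)² = 4π² |c 0|²`. Hence `W q' - 4 W q = 2π ∑ (n² - 1) (n² - 4) |c n|²`: its `n = 0` term
is `(2/π) (∫ q)²` and all other terms are nonnegative, since no integer square lies strictly
between `1` and `4`. Likewise `4 W q + (2/π) (∫ q)² = 8π ∑_{n ≠ 0} (n² - 1) |c n|² ≥ 0`.
-/

open Real intervalIntegral MeasureTheory Complex Function

theorem fourierCoeffOn_deriv {a b : ℝ} (hab : a < b) {f f' : ℝ → ℂ}
    (hf : ∀ x ∈ Set.uIcc a b, HasDerivAt f (f' x) x) (hf' : IntervalIntegrable f' volume a b)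
    (hfab : f a = f b) (n : ℤ) :
    fourierCoeffOn hab f' n = 2 * π * I * n / (b - a) * fourierCoeffOn hab f n := by
  rcases eq_or_ne n 0 with rfl | hn
  · simp [fourierCoeffOn_eq_integral, integral_eq_sub_of_hasDerivAt hf hf', hfab]
  · have hba : ((b - a : ℝ) : ℂ) ≠ 0 := ofReal_ne_zero.2 (sub_pos.2 hab).ne'
    have hπ : (π : ℂ) ≠ 0 := ofReal_ne_zero.2 pi_ne_zero
    have hn' : (n : ℂ) ≠ 0 := Int.cast_ne_zero.2 hn
    rw [fourierCoeffOn_of_hasDerivAt hab hn hf hf', hfab, sub_self, mul_zero, zero_sub]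
    push_cast at hba ⊢
    field_simp

theorem Function.Periodic.deriv {𝕜 F : Type*} [NontriviallyNormedField 𝕜] [NormedAddCommGroup F]
    [NormedSpace 𝕜 F] {f : 𝕜 → F} {c : 𝕜} (hf : Periodic f c) : Periodic (deriv f) c := by
  intro x
  rw [← deriv_comp_add_const, show (fun y => f (y + c)) = f from funext hf]

noncomputable def circleCoeff (q : ℝ → ℝ) (n : ℤ) : ℂ :=
  fourierCoeffOn two_pi_pos (fun x => (q x : ℂ)) n

noncomputable def wirtingerDeficit (q : ℝ → ℝ) : ℝ :=
  ∫ x in 0..2 * π, deriv q x ^ 2 - q x ^ 2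

section
variable {q : ℝ → ℝ}

theorem hasSum_norm_circleCoeff_sq (hq : Continuous q) :
    HasSum (fun n => ‖circleCoeff q n‖ ^ 2) ((2 * π)⁻¹ * ∫ x in 0..2 * π, q x ^ 2) := by
  have hQ : Continuous fun x => (q x : ℂ) := continuous_ofReal.comp hq
  have hL2 : MemLp (fun x => (q x : ℂ)) 2 (volume.restrict (Set.Ioc 0 (2 * π))) :=
    (memLp_two_iff_integrable_sq_norm hQ.aestronglyMeasurable).2 <|
      ((hQ.norm.pow 2).integrableOn_Icc).mono_set Set.Ioc_subset_Icc_self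
  simpa [circleCoeff, norm_real, sq_abs] using hasSum_sq_fourierCoeffOn two_pi_pos hL2

theorem circleCoeff_deriv (hq : Differentiable ℝ q) (hq' : Continuous (deriv q))
    (hper : Periodic q (2 * π)) (n : ℤ) :
    circleCoeff (deriv q) n = I * n * circleCoeff q n := by
  have := fourierCoeffOn_deriv two_pi_pos (f := fun x => (q x : ℂ))
    (fun x _ => (hq x).hasDerivAt.ofReal_comp)
    ((continuous_ofReal.comp hq').intervalIntegrable _ _)
    (by simpa using congrArg ofReal (hper 0).symm) n
  rw [circleCoeff, circleCoeff, this, ofReal_zero, sub_zero]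
  have hπ : (π : ℂ) ≠ 0 := ofReal_ne_zero.2 pi_ne_zero
  push_cast
  field_simp

theorem circleCoeff_zero :
    circleCoeff q 0 = (((2 * π)⁻¹ * ∫ x in 0..2 * π, q x : ℝ) : ℂ) := by
  simp [circleCoeff, fourierCoeffOn_eq_integral, integral_ofReal]

theorem norm_circleCoeff_deriv_sq (hq : Differentiable ℝ q) (hq' : Continuous (deriv q))
    (hper : Periodic q (2 * π)) (n : ℤ) :
    ‖circleCoeff (deriv q) n‖ ^ 2 = (n : ℝ) ^ 2 * ‖circleCoeff q n‖ ^ 2 := by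
  rw [circleCoeff_deriv hq hq' hper, norm_mul, norm_mul, norm_I, one_mul, norm_intCast, mul_pow,
    sq_abs]

theorem hasSum_wirtingerDeficit (hq : ContDiff ℝ 1 q) (hper : Periodic q (2 * π)) :
    HasSum (fun n : ℤ => 2 * π * ((n : ℝ) ^ 2 - 1) * ‖circleCoeff q n‖ ^ 2)
      (wirtingerDeficit q) := by
  have hq' : Continuous (deriv q) := hq.continuous_deriv le_rfl
  have hsum := (hasSum_norm_circleCoeff_sq hq').sub (hasSum_norm_circleCoeff_sq hq.continuous)
  simp only [norm_circleCoeff_deriv_sq (hq.differentiable one_ne_zero) hq' hper] at hsum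
  have hW : wirtingerDeficit q =
      2 * π * ((2 * π)⁻¹ * (∫ x in 0..2 * π, deriv q x ^ 2) -
        (2 * π)⁻¹ * ∫ x in 0..2 * π, q x ^ 2) := by
    have hq'2 : Continuous fun x => deriv q x ^ 2 := by fun_prop
    have hq2 : Continuous fun x => q x ^ 2 := by fun_prop
    rw [wirtingerDeficit, integral_sub (hq'2.intervalIntegrable _ _) (hq2.intervalIntegrable _ _)]
    field_simp
  rw [hW]
  exact (hsum.mul_left (2 * π)).congr_fun fun n => by ring

end

theorem intCast_sq_sub_one_mul_sq_sub_four_nonneg (n : ℤ) :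
    0 ≤ ((n : ℝ) ^ 2 - 1) * ((n : ℝ) ^ 2 - 4) := by
  obtain h | rfl | rfl | rfl | h : n ≤ -2 ∨ n = -1 ∨ n = 0 ∨ n = 1 ∨ 2 ≤ n := by omega
  all_goals try norm_num
  all_goals
    have h4 : (4 : ℝ) ≤ (n : ℝ) ^ 2 := by
      have : (4 : ℤ) ≤ n ^ 2 := by nlinarith
      exact_mod_cast this
    exact mul_nonneg (by linarith) (by linarith)

theorem one_le_intCast_sq {n : ℤ} (hn : n ≠ 0) : (1 : ℝ) ≤ (n : ℝ) ^ 2 := by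
  exact_mod_cast (one_le_sq_iff_one_le_abs _).2 (Int.one_le_abs hn)

theorem stmt_0 (q : ℝ → ℝ) (hq : ContDiff ℝ 2 q)
    (hper : ∀ x, q (x + 2 * π) = q x) :
    (∫ x in (0:ℝ)..(2 * π), (deriv (deriv q) x) ^ 2 - (deriv q x) ^ 2) ≥
      4 * (∫ x in (0:ℝ)..(2 * π), (deriv q x) ^ 2 - (q x) ^ 2) +
        (2 / π) * (∫ x in (0:ℝ)..(2 * π), q x) ^ 2 ∧
    4 * (∫ x in (0:ℝ)..(2 * π), (deriv q x) ^ 2 - (q x) ^ 2) +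
        (2 / π) * (∫ x in (0:ℝ)..(2 * π), q x) ^ 2 ≥ 0 := by
  change wirtingerDeficit (deriv q) ≥ 4 * wirtingerDeficit q + _ ∧
    4 * wirtingerDeficit q + _ ≥ 0
  have hper : Periodic q (2 * π) := hper
  have hq1 : ContDiff ℝ 1 q := hq.of_le one_le_two
  have hW := hasSum_wirtingerDeficit hq1 hper
  have hW' := hasSum_wirtingerDeficit hq.deriv' hper.deriv
  simp only [norm_circleCoeff_deriv_sq (hq1.differentiable one_ne_zero)
    (hq1.continuous_deriv le_rfl) hper] at hW'
  have hgap : HasSum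
      (fun n : ℤ => 2 * π * (((n : ℝ) ^ 2 - 1) * ((n : ℝ) ^ 2 - 4)) * ‖circleCoeff q n‖ ^ 2)
      (wirtingerDeficit (deriv q) - 4 * wirtingerDeficit q) :=
    (hW'.sub (hW.mul_left 4)).congr_fun fun n => by ring
  have hmean : 2 / π * (∫ x in 0..2 * π, q x) ^ 2 = 8 * π * ‖circleCoeff q 0‖ ^ 2 := by
    simp only [circleCoeff_zero, norm_real, norm_eq_abs, sq_abs]
    field_simp
    ring
  rw [hmean]
  constructor
  · have := le_hasSum hgap 0 fun n _ =>
      mul_nonneg (mul_nonneg two_pi_pos.le (intCast_sq_sub_one_mul_sq_sub_four_nonneg n))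
        (sq_nonneg _)
    norm_num at this
    linarith
  · have := le_hasSum (hW.mul_left 4) 0 fun n hn =>
      mul_nonneg zero_le_four <| mul_nonneg
        (mul_nonneg two_pi_pos.le (sub_nonneg.2 (one_le_intCast_sq hn))) (sq_nonneg _)
    norm_num at this
    linarith
end

section
/- Let p : ℝ → ℝ be a C² 2π-periodic function with p + p'' > 0 (the support function of a strictly convex body K). Let L = ∫₀^{2π} p dφ, F = (1/2)∫₀^{2π} p(p+p'') dφ, and let F_e = −(1/2)∫₀^{2π} p'(p' + p''') dφ, so that |F_e| = (1/2)∫₀^{2π} ((p'')² − (p')²) dφ. Then L² − 4πF ≤ π|F_e|. -/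
open Real intervalIntegral MeasureTheory Complex AddCircle

lemma two_pi_pos' : (0:ℝ) < 2 * π := by positivity

lemma fourierCoeffOn_congr_b {a b b' : ℝ} (h : b = b') (hab : a < b) (hab' : a < b')
    (f : ℝ → ℂ) (n : ℤ) : fourierCoeffOn hab f n = fourierCoeffOn hab' f n := by
  subst h; rfl

lemma parseval_interval (g : ℝ → ℝ) (hg : Continuous g) (hgp : g (0 + 2 * π) = g 0) :
    HasSum (fun n : ℤ => ‖fourierCoeffOn two_pi_pos' (fun x => (g x : ℂ)) n‖ ^ 2)
      ((1 / (2 * π)) * ∫ x in (0:ℝ)..(2 * π), (g x) ^ 2) := by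
  haveI : Fact ((0:ℝ) < 2 * π) := ⟨two_pi_pos'⟩
  set f : ℝ → ℂ := fun x => (g x : ℂ) with hf
  have hf0 : f 0 = f (0 + 2 * π) := by
    simp only [hf]; exact_mod_cast hgp.symm
  have hGc : Continuous (AddCircle.liftIco (2*π) 0 f) :=
    AddCircle.liftIco_continuous hf0 ((Complex.continuous_ofReal.comp hg).continuousOn)
  set G : C(AddCircle (2*π), ℂ) := ⟨AddCircle.liftIco (2*π) 0 f, hGc⟩ with hG
  set F2 := ContinuousMap.toLp (E := ℂ) 2 haarAddCircle ℂ G with hF2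
  have key := tsum_sq_fourierCoeff F2
  have hC : ∀ n, fourierCoeff F2 n = fourierCoeffOn two_pi_pos' f n := by
    intro n
    rw [hF2, fourierCoeff_toLp]
    have : (⇑G : AddCircle (2*π) → ℂ) = AddCircle.liftIco (2*π) 0 f := rfl
    rw [this, fourierCoeff_liftIco_eq]
    exact fourierCoeffOn_congr_b (zero_add _) _ _ _ _
  have hsummable : Summable (fun n : ℤ => ‖fourierCoeff F2 n‖ ^ 2) := by
    have h := (lp.memℓp (fourierBasis.repr F2)).summable
      (by norm_num : (0:ℝ) < ENNReal.toReal 2)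
    simp only [fourierBasis_repr] at h
    have : ∀ x : ℝ, x ^ ENNReal.toReal 2 = x ^ 2 := by
      intro x
      rw [show ENNReal.toReal 2 = ((2:ℕ):ℝ) by norm_num, Real.rpow_natCast]
    simpa only [this] using h
  -- integral side
  have hint1 : ∫ t : AddCircle (2*π), ‖F2 t‖ ^ 2 ∂haarAddCircle
      = ∫ t : AddCircle (2*π), ‖G t‖ ^ 2 ∂haarAddCircle := by
    apply MeasureTheory.integral_congr_ae
    filter_upwards [ContinuousMap.coeFn_toLp (p := 2) (𝕜 := ℂ) haarAddCircle G] with t ht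
    rw [hF2, ht]
  have hint2 : ∫ t : AddCircle (2*π), ‖G t‖ ^ 2
      = (2*π) * ∫ t : AddCircle (2*π), ‖G t‖ ^ 2 ∂haarAddCircle := by
    rw [AddCircle.volume_eq_smul_haarAddCircle, MeasureTheory.integral_smul_measure,
      ENNReal.toReal_ofReal two_pi_pos'.le, smul_eq_mul]
  have hint3 : ∫ x in (0:ℝ)..(0 + 2*π), ‖G x‖ ^ 2 = ∫ t : AddCircle (2*π), ‖G t‖ ^ 2 :=
    AddCircle.intervalIntegral_preimage (2*π) 0 (fun t => ‖G t‖ ^ 2)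
  have hint4 : ∫ x in (0:ℝ)..(0 + 2*π), ‖G x‖ ^ 2 = ∫ x in (0:ℝ)..(2*π), (g x) ^ 2 := by
    rw [zero_add]
    apply intervalIntegral.integral_congr
    intro x hx
    rw [Set.uIcc_of_le two_pi_pos'.le] at hx
    have hGx : G (x : AddCircle (2*π)) = f x := by
      show AddCircle.liftIco (2*π) 0 f (x : AddCircle (2*π)) = f x
      rcases lt_or_eq_of_le hx.2 with h | h
      · exact AddCircle.liftIco_coe_apply ⟨hx.1, by rw [zero_add]; exact h⟩
      · have hxc : ((x : ℝ) : AddCircle (2*π)) = ((0:ℝ) : AddCircle (2*π)) := by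
          rw [h]
          simpa using AddCircle.coe_add_period (2*π) 0
        rw [hxc]
        have h0 : AddCircle.liftIco (2*π) 0 f ((0:ℝ) : AddCircle (2*π)) = f 0 :=
          AddCircle.liftIco_coe_apply ⟨le_refl _, by rw [zero_add]; exact two_pi_pos'⟩
        rw [h0, h, hf]
        have hg2 : g 0 = g (2 * π) := by
          have := hgp; rw [zero_add] at this; exact this.symm
        show ((g 0 : ℂ)) = ((g (2*π) : ℂ))
        exact_mod_cast hg2
    dsimp only
    rw [hGx, hf]
    simp only [Complex.norm_real, Real.norm_eq_abs, _root_.sq_abs]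
  have H := hsummable.hasSum
  rw [key, hint1] at H
  have : ∫ t : AddCircle (2*π), ‖G t‖ ^ 2 ∂haarAddCircle
      = (1/(2*π)) * ∫ x in (0:ℝ)..(2*π), (g x) ^ 2 := by
    rw [← hint4, hint3]
    rw [hint2]
    field_simp
  rw [this] at H
  simpa only [hC] using H

lemma norm_fourierCoeffOn_deriv (f f' : ℝ → ℝ) (hf' : ∀ x, HasDerivAt f (f' x) x)
    (hc : Continuous f') (hper : f (2*π) = f 0) (n : ℤ) :
    ‖fourierCoeffOn two_pi_pos' (fun x => (f' x : ℂ)) n‖ ^ 2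
      = (n:ℝ)^2 * ‖fourierCoeffOn two_pi_pos' (fun x => (f x : ℂ)) n‖ ^ 2 := by
  haveI : Fact ((0:ℝ) < 2 * π) := ⟨two_pi_pos'⟩
  have hint : IntervalIntegrable (fun x => (f' x : ℂ)) volume 0 (2*π) :=
    (Complex.continuous_ofReal.comp hc).intervalIntegrable 0 (2*π)
  by_cases hn : n = 0
  · subst hn
    have hzero : fourierCoeffOn two_pi_pos' (fun x => (f' x : ℂ)) 0 = 0 := by
      rw [fourierCoeffOn_eq_integral]
      have hFTC : (∫ x in (0:ℝ)..(2*π), f' x) = f (2*π) - f 0 :=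
        intervalIntegral.integral_eq_sub_of_hasDerivAt (fun x _ => hf' x)
          (hc.intervalIntegrable 0 (2*π))
      simp only [neg_zero, fourier_zero, one_smul]
      rw [intervalIntegral.integral_ofReal, hFTC, hper]
      simp
    rw [hzero]
    simp
  · have heq := fourierCoeffOn_of_hasDerivAt two_pi_pos' hn
      (fun x _ => (hf' x).ofReal_comp) hint
    have hper' : ((fun x => (f x : ℂ)) (2*π) - (fun x => (f x : ℂ)) 0) = 0 := by
      simp only []
      rw [hper, sub_self]
    rw [hper'] at heq
    have hn' : (n:ℂ) ≠ 0 := Int.cast_ne_zero.mpr hn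
    have hπ : (π:ℂ) ≠ 0 := Complex.ofReal_ne_zero.mpr pi_ne_zero
    have hrel : fourierCoeffOn two_pi_pos' (fun x => (f' x : ℂ)) n
        = Complex.I * n * fourierCoeffOn two_pi_pos' (fun x => (f x : ℂ)) n := by
      rw [heq]
      field_simp
      push_cast; ring
    rw [hrel]
    rw [norm_mul, norm_mul, Complex.norm_I, one_mul, mul_pow]
    congr 1
    rw [Complex.norm_intCast]
    rw [_root_.sq_abs]

set_option maxHeartbeats 1000000 in
theorem stmt_3 (p : ℝ → ℝ) (hp : ContDiff ℝ 2 p)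
    (hper : ∀ x, p (x + 2 * π) = p x)
    (hconv : ∀ x, 0 < p x + deriv (deriv p) x)
    (L F Fe : ℝ)
    (hL : L = ∫ x in (0:ℝ)..(2 * π), p x)
    (hF : F = (1 / 2) * ∫ x in (0:ℝ)..(2 * π), (p x) ^ 2 - (deriv p x) ^ 2)
    (hFe : Fe = (1 / 2) * ∫ x in (0:ℝ)..(2 * π),
      (deriv (deriv p) x) ^ 2 - (deriv p x) ^ 2) :
    L ^ 2 - 4 * π * F ≤ π * Fe := by
  have hπ0 : π ≠ 0 := pi_ne_zero
  have hp' : ContDiff ℝ ((1:WithTop ℕ∞)+1) p := by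
    have h12 : ((1:WithTop ℕ∞)+1) = 2 := by norm_num
    rw [h12]; exact hp
  obtain ⟨hpd, -, hq1⟩ := contDiff_succ_iff_deriv.mp hp'
  obtain ⟨hqd, hrc⟩ := contDiff_one_iff_deriv.mp hq1
  have hpc : Continuous p := hp.continuous
  have hqc : Continuous (deriv p) := hq1.continuous
  have hqper : ∀ x, deriv p (x + 2 * π) = deriv p x := by
    intro x
    have hfun : (fun y => p (y + 2*π)) = p := funext hper
    calc deriv p (x + 2*π) = deriv (fun y => p (y + 2*π)) x :=
          (deriv_comp_add_const p (2*π) x).symm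
      _ = deriv p x := by rw [hfun]
  have hrper : ∀ x, deriv (deriv p) (x + 2 * π) = deriv (deriv p) x := by
    intro x
    have hfun : (fun y => deriv p (y + 2*π)) = deriv p := funext hqper
    calc deriv (deriv p) (x + 2*π) = deriv (fun y => deriv p (y + 2*π)) x :=
          (deriv_comp_add_const (deriv p) (2*π) x).symm
      _ = deriv (deriv p) x := by rw [hfun]
  have hp20 : p (2*π) = p 0 := by have := hper 0; rwa [zero_add] at this
  have hq20 : deriv p (2*π) = deriv p 0 := by have := hqper 0; rwa [zero_add] at this
  have hpder : ∀ x, HasDerivAt p (deriv p x) x := fun x => (hpd x).hasDerivAt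
  have hqder : ∀ x, HasDerivAt (deriv p) (deriv (deriv p) x) x := fun x => (hqd x).hasDerivAt
  have hrel1 : ∀ n : ℤ, ‖fourierCoeffOn two_pi_pos' (fun x => Complex.ofReal (deriv p x)) n‖ ^ 2
      = (n:ℝ)^2 * ‖fourierCoeffOn two_pi_pos' (fun x => Complex.ofReal (p x)) n‖ ^ 2 := fun n =>
    norm_fourierCoeffOn_deriv p (deriv p) hpder hqc hp20 n
  have hrel2 : ∀ n : ℤ, ‖fourierCoeffOn two_pi_pos' (fun x => Complex.ofReal (deriv (deriv p) x)) n‖ ^ 2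
      = (n:ℝ)^2 * ‖fourierCoeffOn two_pi_pos' (fun x => Complex.ofReal (deriv p x)) n‖ ^ 2 := fun n =>
    norm_fourierCoeffOn_deriv (deriv p) (deriv (deriv p)) hqder hrc hq20 n
  have hS0 := parseval_interval p hpc (hper 0)
  have hS1' := parseval_interval (deriv p) hqc (hqper 0)
  have hS2' := parseval_interval (deriv (deriv p)) hrc (hrper 0)
  simp only [hrel1] at hS1'
  simp only [hrel2, hrel1] at hS2'
  have hKey := (hS2'.sub (hS1'.mul_left 5)).add (hS0.mul_left 4)
  have hfun : (fun n : ℤ =>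
        ((n:ℝ)^2 * ((n:ℝ)^2 * ‖fourierCoeffOn two_pi_pos' (fun x => Complex.ofReal (p x)) n‖ ^ 2)
          - 5 * ((n:ℝ)^2 * ‖fourierCoeffOn two_pi_pos' (fun x => Complex.ofReal (p x)) n‖ ^ 2))
          + 4 * ‖fourierCoeffOn two_pi_pos' (fun x => Complex.ofReal (p x)) n‖ ^ 2)
      = fun n : ℤ => ((n:ℝ)^2 - 1) * ((n:ℝ)^2 - 4)
          * ‖fourierCoeffOn two_pi_pos' (fun x => Complex.ofReal (p x)) n‖ ^ 2 := funext fun n => by ring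
  rw [hfun] at hKey
  have hnonneg : ∀ j : ℤ, 0 ≤ ((j:ℝ)^2 - 1) * ((j:ℝ)^2 - 4)
      * ‖fourierCoeffOn two_pi_pos' (fun x => Complex.ofReal (p x)) j‖ ^ 2 := by
    intro j
    have hAj : (0:ℝ) ≤ ‖fourierCoeffOn two_pi_pos' (fun x => Complex.ofReal (p x)) j‖ ^ 2 := sq_nonneg _
    have hfac : (0:ℝ) ≤ ((j:ℝ)^2 - 1) * ((j:ℝ)^2 - 4) := by
      rcases (show j ≤ -2 ∨ (-1 ≤ j ∧ j ≤ 1) ∨ 2 ≤ j by omega) with h | h | h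
      · have h4 : (4:ℝ) ≤ (j:ℝ)^2 := by
          have : (4:ℤ) ≤ j^2 := by nlinarith
          exact_mod_cast this
        nlinarith
      · have h1 : (j:ℝ)^2 ≤ 1 := by
          have : j^2 ≤ (1:ℤ) := by nlinarith [h.1, h.2]
          exact_mod_cast this
        nlinarith
      · have h4 : (4:ℝ) ≤ (j:ℝ)^2 := by
          have : (4:ℤ) ≤ j^2 := by nlinarith
          exact_mod_cast this
        nlinarith
    exact mul_nonneg hfac hAj
  have hc0 : fourierCoeffOn two_pi_pos' (fun x => Complex.ofReal (p x)) 0 = ((1/(2*π) * L : ℝ) : ℂ) := by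
    rw [fourierCoeffOn_eq_integral]
    simp only [neg_zero, fourier_zero, one_smul, sub_zero]
    rw [intervalIntegral.integral_ofReal, hL]
    push_cast
    rw [Complex.real_smul]
    push_cast
    ring
  have hA0 : ‖fourierCoeffOn two_pi_pos' (fun x => Complex.ofReal (p x)) 0‖ ^ 2
      = (1/(2*π))^2 * L^2 := by
    rw [hc0, Complex.norm_real, Real.norm_eq_abs, _root_.sq_abs]
    ring
  have h0b : 4 * ((1/(2*π))^2 * L^2) ≤ (1/(2*π)) * (∫ x in (0:ℝ)..(2*π), (deriv (deriv p) x)^2)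
      - 5 * ((1/(2*π)) * (∫ x in (0:ℝ)..(2*π), (deriv p x)^2))
      + 4 * ((1/(2*π)) * (∫ x in (0:ℝ)..(2*π), (p x)^2)) := by
    have h0 := le_hasSum hKey 0 (fun j _ => hnonneg j)
    rw [hA0] at h0
    push_cast at h0
    linarith
  have hmul := mul_le_mul_of_nonneg_left h0b (show (0:ℝ) ≤ 2*π^2 by positivity)
  have e1 : 2*π^2 * (4 * ((1/(2*π))^2 * L^2)) = 2 * L^2 := by
    field_simp; ring
  have e2 : 2*π^2 * ((1/(2*π)) * (∫ x in (0:ℝ)..(2*π), (deriv (deriv p) x)^2)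
      - 5 * ((1/(2*π)) * (∫ x in (0:ℝ)..(2*π), (deriv p x)^2))
      + 4 * ((1/(2*π)) * (∫ x in (0:ℝ)..(2*π), (p x)^2)))
      = π * (∫ x in (0:ℝ)..(2*π), (deriv (deriv p) x)^2)
        - 5 * (π * (∫ x in (0:ℝ)..(2*π), (deriv p x)^2))
        + 4 * (π * (∫ x in (0:ℝ)..(2*π), (p x)^2)) := by
    field_simp
  rw [e1, e2] at hmul
  have hsplitF : (∫ x in (0:ℝ)..(2*π), ((p x)^2 - (deriv p x)^2))
      = (∫ x in (0:ℝ)..(2*π), (p x)^2) - (∫ x in (0:ℝ)..(2*π), (deriv p x)^2) :=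
    intervalIntegral.integral_sub ((hpc.pow 2).intervalIntegrable _ _)
      ((hqc.pow 2).intervalIntegrable _ _)
  have hsplitFe : (∫ x in (0:ℝ)..(2*π), ((deriv (deriv p) x)^2 - (deriv p x)^2))
      = (∫ x in (0:ℝ)..(2*π), (deriv (deriv p) x)^2)
        - (∫ x in (0:ℝ)..(2*π), (deriv p x)^2) :=
    intervalIntegral.integral_sub ((hrc.pow 2).intervalIntegrable _ _)
      ((hqc.pow 2).intervalIntegrable _ _)
  rw [hF, hFe, hsplitF, hsplitFe]
  nlinarith [hmul]
end
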